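/- arXiv:1909.10706 — 11 statements merged into one kernel-verified Lean document; each statement's English description precedes it below -/
import Mathlib

section
/- Let n, m, p ≥ 1. Let H be an n×n real matrix such that ηᵀHη > 0 for every nonzero η ∈ ℝⁿ, let A be an n×m real matrix, G an n×p real matrix, and let s, z ∈ ℝᵖ satisfy s_i ≥ 0, z_i ≥ 0, s_i z_i = 0 and s_i + z_i > 0 for every i ∈ {1,…,p}. Assume that the family of vectors consisting of the m columns of A together with the columns G_i of G for those indices i with s_i = 0 is linearly independent. Then the (n+m+3p)×(n+m+3p) block matrix M = [[H, A, −G, 0, 0], [Aᵀ, 0, 0, 0, 0], [Gᵀ, 0, 0, −I_p, 0], [0, 0, I_p, 0, −I_p], [0, 0, 0, D(z), D(s)]], where D(u) denotes the p×p diagonal matrix with diagonal vector u and I_p the p×p identity, is invertible. -/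
open Matrix

/-- The KKT Jacobian block matrix
`[[H, A, −G, 0, 0], [Aᵀ, 0, 0, 0, 0], [Gᵀ, 0, 0, −I, 0], [0, 0, I, 0, −I], [0, 0, 0, D(z), D(s)]]`. -/
noncomputable def KKTmat (n m p : ℕ) (H : Matrix (Fin n) (Fin n) ℝ)
    (A : Matrix (Fin n) (Fin m) ℝ) (G : Matrix (Fin n) (Fin p) ℝ)
    (s z : Fin p → ℝ) :
    Matrix (Fin n ⊕ (Fin m ⊕ (Fin p ⊕ (Fin p ⊕ Fin p))))
           (Fin n ⊕ (Fin m ⊕ (Fin p ⊕ (Fin p ⊕ Fin p)))) ℝ :=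
  Matrix.fromBlocks H (Matrix.fromCols A (Matrix.fromCols (-G) 0))
    (Matrix.fromRows Aᵀ (Matrix.fromRows Gᵀ 0))
    (Matrix.fromBlocks 0 0 0
      (Matrix.fromBlocks 0 (Matrix.fromCols (-1) 0) (Matrix.fromRows 1 0)
        (Matrix.fromBlocks 0 (-1) (Matrix.diagonal z) (Matrix.diagonal s))))

/-- Nonsingularity of the KKT Jacobian at an optimal solution, under second-order
sufficiency, nonnegativity, strict complementarity and linear independence of the
equality gradients together with the active inequality gradients. -/
theorem kkt_jacobian_nonsingular_at_optimum
    (n m p : ℕ) (hn : 1 ≤ n) (hm : 1 ≤ m) (hp : 1 ≤ p)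
    (H : Matrix (Fin n) (Fin n) ℝ) (A : Matrix (Fin n) (Fin m) ℝ)
    (G : Matrix (Fin n) (Fin p) ℝ) (s z : Fin p → ℝ)
    (hH : ∀ η : Fin n → ℝ, η ≠ 0 → 0 < η ⬝ᵥ (H *ᵥ η))
    (hs : ∀ i, 0 ≤ s i) (hz : ∀ i, 0 ≤ z i)
    (hcompl : ∀ i, s i * z i = 0)
    (hstrict : ∀ i, 0 < s i + z i)
    (hli : LinearIndependent ℝ
      (Sum.elim (fun j : Fin m => fun k : Fin n => A k j)
        (fun i : {i : Fin p // s i = 0} => fun k : Fin n => G k i.1))) :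
    IsUnit (KKTmat n m p H A G s z) := by
  rw [← Matrix.mulVec_injective_iff_isUnit, ← Matrix.coe_mulVecLin,
    ← LinearMap.ker_eq_bot, LinearMap.ker_eq_bot']
  intro v hv
  simp only [Matrix.mulVecLin_apply] at hv
  set x : Fin n → ℝ := fun i => v (Sum.inl i) with hx
  set y : Fin m → ℝ := fun j => v (Sum.inr (Sum.inl j)) with hy
  set w : Fin p → ℝ := fun i => v (Sum.inr (Sum.inr (Sum.inl i))) with hw
  set r : Fin p → ℝ := fun i => v (Sum.inr (Sum.inr (Sum.inr (Sum.inl i)))) with hr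
  set t : Fin p → ℝ := fun i => v (Sum.inr (Sum.inr (Sum.inr (Sum.inr i)))) with ht
  have hv' : v = Sum.elim x (Sum.elim y (Sum.elim w (Sum.elim r t))) := by
    funext i
    rcases i with i | j | k | l | o <;> rfl
  rw [hv'] at hv
  simp only [KKTmat, Matrix.fromBlocks_mulVec, Matrix.fromCols_mulVec_sumElim,
    Matrix.fromRows_mulVec, Matrix.zero_mulVec, Matrix.neg_mulVec, Matrix.one_mulVec,
    add_zero, zero_add, Matrix.mulVec_diagonal, Sum.elim_comp_inl, Sum.elim_comp_inr,
    Function.comp_assoc] at hv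
  -- extract component equations
  have e1 : H *ᵥ x + (A *ᵥ y + -(G *ᵥ w)) = 0 := by
    funext k
    have := congrFun hv (Sum.inl k)
    simpa using this
  have e2 : Aᵀ *ᵥ x = 0 := by
    funext j
    have := congrFun hv (Sum.inr (Sum.inl j))
    simpa using this
  have e3 : ∀ i, (Gᵀ *ᵥ x) i - r i = 0 := by
    intro i
    have := congrFun hv (Sum.inr (Sum.inr (Sum.inl i)))
    simp only [Sum.elim_inl, Sum.elim_inr, Pi.add_apply, Pi.neg_apply, Pi.zero_apply] at this
    linarith
  have e4 : ∀ i, w i - t i = 0 := by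
    intro i
    have := congrFun hv (Sum.inr (Sum.inr (Sum.inr (Sum.inl i))))
    simp only [Sum.elim_inl, Sum.elim_inr, Pi.add_apply, Pi.neg_apply, Pi.zero_apply] at this
    linarith
  have e5 : ∀ i, z i * r i + s i * t i = 0 := by
    intro i
    have := congrFun hv (Sum.inr (Sum.inr (Sum.inr (Sum.inr i))))
    simp only [Sum.elim_inl, Sum.elim_inr, Pi.add_apply, Pi.neg_apply, Pi.zero_apply,
      Matrix.mulVec_diagonal] at this
    linarith
  have hwt : ∀ i, t i = w i := fun i => by have := e4 i; linarith
  -- key complementarity facts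
  have keyr : ∀ i, s i = 0 → r i = 0 := by
    intro i h0
    have h5 := e5 i
    rw [h0, zero_mul, add_zero] at h5
    have hzpos : 0 < z i := by have := hstrict i; rw [h0] at this; simpa using this
    rcases mul_eq_zero.mp h5 with h | h
    · exact absurd h (ne_of_gt hzpos)
    · exact h
  have keyw : ∀ i, s i ≠ 0 → w i = 0 := by
    intro i h0
    have hz0 : z i = 0 := by
      rcases mul_eq_zero.mp (hcompl i) with h | h
      · exact absurd h h0
      · exact h
    have h5 := e5 i
    rw [hz0, zero_mul, zero_add, hwt i] at h5
    rcases mul_eq_zero.mp h5 with h | h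
    · exact absurd h h0
    · exact h
  -- r ⬝ w = 0
  have hrw : r ⬝ᵥ w = 0 := by
    apply Finset.sum_eq_zero
    intro i _
    by_cases h0 : s i = 0
    · rw [keyr i h0, zero_mul]
    · rw [keyw i h0, mul_zero]
  -- x = 0
  have hx0 : x = 0 := by
    by_contra hne
    have hpos := hH x hne
    have hc : x ⬝ᵥ (H *ᵥ x + (A *ᵥ y + -(G *ᵥ w))) = 0 := by rw [e1, dotProduct_zero]
    rw [dotProduct_add, dotProduct_add, dotProduct_neg,
      Matrix.dotProduct_mulVec x A y, Matrix.dotProduct_mulVec x G w,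
      ← Matrix.mulVec_transpose A x, ← Matrix.mulVec_transpose G x, e2,
      zero_dotProduct] at hc
    have hGx : Gᵀ *ᵥ x = r := by
      funext i
      have := e3 i
      linarith
    rw [hGx, hrw] at hc
    linarith
  -- consequences
  have hr0 : r = 0 := by
    funext i
    have := e3 i
    rw [hx0] at this
    simp only [Matrix.mulVec_zero, Pi.zero_apply] at this
    simp only [Pi.zero_apply]
    linarith
  have e1' : A *ᵥ y + -(G *ᵥ w) = 0 := by
    have := e1
    rw [hx0, Matrix.mulVec_zero, zero_add] at this
    exact this
  -- linear independence step
  classical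
  rw [Fintype.linearIndependent_iff] at hli
  have hli' := hli (Sum.elim y (fun i : {i : Fin p // s i = 0} => -(w i.1)))
  have hsum : ∑ i, (Sum.elim y (fun i : {i : Fin p // s i = 0} => -(w i.1))) i •
      (Sum.elim (fun j : Fin m => fun k : Fin n => A k j)
        (fun i : {i : Fin p // s i = 0} => fun k : Fin n => G k i.1)) i = 0 := by
    rw [Fintype.sum_sum_type]
    funext k
    simp only [Sum.elim_inl, Sum.elim_inr, Pi.add_apply, Finset.sum_apply,
      Pi.smul_apply, smul_eq_mul, Pi.zero_apply]
    have hA : ∑ j, y j * A k j = (A *ᵥ y) k := by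
      simp [Matrix.mulVec, dotProduct, mul_comm]
    have hG : ∑ i : {i : Fin p // s i = 0}, -(w i.1) * G k i.1 = -((G *ᵥ w) k) := by
      have h1 : ∑ i : {i : Fin p // s i = 0}, w i.1 * G k i.1
          = ∑ i ∈ Finset.univ.filter (fun i => s i = 0), w i * G k i := by
        exact (Finset.sum_subtype _ (fun i => by simp) (fun i => w i * G k i)).symm
      have h2 : ∑ i ∈ Finset.univ.filter (fun i => s i = 0), w i * G k i
          = ∑ i, w i * G k i := by
        apply Finset.sum_filter_of_ne
        intro i _ hne
        by_contra h0
        exact hne (by rw [keyw i h0, zero_mul])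
      have h3 : (G *ᵥ w) k = ∑ i, w i * G k i := by
        simp [Matrix.mulVec, dotProduct, mul_comm]
      simp only [neg_mul]
      rw [Finset.sum_neg_distrib, h1, h2, h3]
    rw [hA, hG]
    have := congrFun e1' k
    simpa using this
  have hcoef := hli' hsum
  have hy0 : ∀ j, y j = 0 := fun j => hcoef (Sum.inl j)
  have hw0 : ∀ i, w i = 0 := by
    intro i
    by_cases h0 : s i = 0
    · have := hcoef (Sum.inr ⟨i, h0⟩)
      simp only [Sum.elim_inr] at this
      linarith
    · exact keyw i h0
  -- conclude v = 0
  funext i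
  rcases i with i | j | k | l | o
  · exact congrFun hx0 i
  · exact hy0 j
  · exact hw0 k
  · exact congrFun hr0 l
  · rw [show v (Sum.inr (Sum.inr (Sum.inr (Sum.inr o)))) = t o from rfl, hwt o, hw0 o]; rfl
end

section
/- Let p ≥ 1 be an integer, z, s ∈ ℝᵖ, μ = zᵀs/p, and let φ > 0 be a real number such that ‖(z₁s₁, …, z_p s_p)‖² ≤ φ. Let σ ∈ (0,1), β ∈ (0, 1/2], α ∈ (0, π/2], and let Ψ be a real number. If Ψ ≤ φ − 2β sin(α) (φ − σ p μ²), then Ψ ≤ φ (1 − 2β(1−σ) sin α) < φ. -/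
open scoped BigOperators

/-- Armijo-type decrease of the merit function along the arc: if
`Ψ ≤ φ − 2β sin α (φ − σ p μ²)` with `μ = zᵀs/p` and `‖D(z)s‖² ≤ φ`, then
`Ψ ≤ φ (1 − 2β(1−σ) sin α) < φ`. -/
theorem merit_decrease (p : ℕ) (hp : 1 ≤ p) (z s : Fin p → ℝ)
    (φ : ℝ) (hφ : 0 < φ)
    (hnorm : ∑ i, (z i * s i) ^ 2 ≤ φ)
    (σ β α Ψ : ℝ)
    (hσ : σ ∈ Set.Ioo (0 : ℝ) 1)
    (hβ : β ∈ Set.Ioc (0 : ℝ) (1 / 2))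
    (hα : α ∈ Set.Ioc (0 : ℝ) (Real.pi / 2))
    (hΨ : Ψ ≤ φ - 2 * β * Real.sin α *
      (φ - σ * p * ((∑ i, z i * s i) / p) ^ 2)) :
    Ψ ≤ φ * (1 - 2 * β * (1 - σ) * Real.sin α) ∧
      φ * (1 - 2 * β * (1 - σ) * Real.sin α) < φ := by
  obtain ⟨hσ0, hσ1⟩ := hσ
  obtain ⟨hβ0, hβ2⟩ := hβ
  obtain ⟨hα0, hα2⟩ := hα
  have hp0 : (0 : ℝ) < p := by exact_mod_cast hp
  have hsin : 0 < Real.sin α := Real.sin_pos_of_pos_of_lt_pi hα0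
    (lt_of_le_of_lt hα2 (by linarith [Real.pi_pos]))
  have hsin1 : Real.sin α ≤ 1 := Real.sin_le_one α
  have hcs : (∑ i, z i * s i) ^ 2 ≤ p * ∑ i, (z i * s i) ^ 2 := by
    simpa using sq_sum_le_card_mul_sum_sq (s := Finset.univ)
      (f := fun i => z i * s i)
  have hμ : σ * p * ((∑ i, z i * s i) / p) ^ 2 ≤ σ * φ := by
    have h1 : ((∑ i, z i * s i) / p) ^ 2 = (∑ i, z i * s i) ^ 2 / p ^ 2 := by
      ring
    have h2 : p * ((∑ i, z i * s i) / p) ^ 2 ≤ φ := by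
      rw [h1]
      calc (p : ℝ) * ((∑ i, z i * s i) ^ 2 / p ^ 2)
          = (∑ i, z i * s i) ^ 2 / p := by field_simp
        _ ≤ φ := by
            rw [div_le_iff₀ hp0]
            calc (∑ i, z i * s i) ^ 2 ≤ p * ∑ i, (z i * s i) ^ 2 := hcs
              _ ≤ φ * p := by nlinarith
    calc σ * p * ((∑ i, z i * s i) / p) ^ 2
        = σ * (p * ((∑ i, z i * s i) / p) ^ 2) := by ring
      _ ≤ σ * φ := by nlinarith
  have hkey : 2 * β * Real.sin α * ((1 - σ) * φ) ≤
      2 * β * Real.sin α * (φ - σ * p * ((∑ i, z i * s i) / p) ^ 2) := by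
    have h3 : (1 - σ) * φ ≤ φ - σ * p * ((∑ i, z i * s i) / p) ^ 2 := by linarith
    exact mul_le_mul_of_nonneg_left h3 (by positivity)
  constructor
  · nlinarith
  · nlinarith [mul_pos (mul_pos (mul_pos (by linarith : (0:ℝ) < 2*β) (by linarith : (0:ℝ) < 1 - σ)) hsin) hφ]
end

section
/- Let N ≥ 1, let F : ℝᴺ → ℝᴺ be differentiable at v ∈ ℝᴺ, let v̇, v̈ ∈ ℝᴺ, and define ψ(α) = ‖F(v − v̇ sin α + v̈ (1 − cos α))‖². Then ψ is differentiable at α = 0 with ψ'(0) = −2⟨F(v), F'(v)v̇⟩. Moreover, if F'(v)v̇ = F(v) − σμ ē for real numbers σ, μ and a vector ē ∈ ℝᴺ satisfying ⟨F(v), ē⟩ = pμ for an integer p ≥ 1, then ψ'(0) = −2(‖F(v)‖² − σ p μ²); and if additionally p μ² ≤ ‖F(v)‖² and σ ∈ (0,1), then ψ'(0) ≤ −2‖F(v)‖²(1 − σ). -/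
/-! The arc leaves `v` with velocity `-v̇`, so by the chain rule `ψ'(0) = 2⟨F(v), F'(v)(-v̇)⟩`.
Substituting the Newton equation and `⟨F(v), ē⟩ = pμ` gives `-2(‖F(v)‖² - σpμ²)`, and then
`pμ² ≤ ‖F(v)‖²` with `σ > 0` gives the bound. -/

open scoped RealInnerProductSpace

section Arc

variable {E G : Type*} [NormedAddCommGroup E] [NormedSpace ℝ E]
  [NormedAddCommGroup G] [InnerProductSpace ℝ G]

noncomputable def ellipsoidalArc (v vdot vddot : E) (α : ℝ) : E :=
  v - Real.sin α • vdot + (1 - Real.cos α) • vddot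

@[simp]
theorem ellipsoidalArc_zero (v vdot vddot : E) : ellipsoidalArc v vdot vddot 0 = v := by
  simp [ellipsoidalArc]

theorem hasDerivAt_ellipsoidalArc_zero (v vdot vddot : E) :
    HasDerivAt (ellipsoidalArc v vdot vddot) (-vdot) 0 := by
  have hsin := (Real.hasDerivAt_sin 0).smul_const vdot
  have hcos := ((Real.hasDerivAt_cos 0).const_sub 1).smul_const vddot
  convert ((hasDerivAt_const 0 v).sub hsin).add hcos using 1
  · rfl
  · simp

theorem hasDerivAt_norm_sq_comp_ellipsoidalArc_zero {F : E → G} {F' : E →L[ℝ] G}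
    {v : E} (hF : HasFDerivAt F F' v) (vdot vddot : E) :
    HasDerivAt (fun α => ‖F (ellipsoidalArc v vdot vddot α)‖ ^ 2)
      (-2 * ⟪F v, F' vdot⟫) 0 := by
  rw [← ellipsoidalArc_zero v vdot vddot] at hF
  convert (hF.comp_hasDerivAt 0 (hasDerivAt_ellipsoidalArc_zero v vdot vddot)).norm_sq
    using 1
  · rfl
  · rw [Function.comp_apply, ellipsoidalArc_zero, map_neg, inner_neg_right]
    ring

end Arc

theorem real_inner_sub_smul_of_inner_eq {G : Type*} [NormedAddCommGroup G]
    [InnerProductSpace ℝ G] {x e : G} {p μ : ℝ} (σ : ℝ) (hxe : ⟪x, e⟫ = p * μ) :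
    ⟪x, x - (σ * μ) • e⟫ = ‖x‖ ^ 2 - σ * p * μ ^ 2 := by
  rw [inner_sub_right, real_inner_smul_right, hxe, real_inner_self_eq_norm_sq]
  ring

theorem merit_directional_derivative_general (N p : ℕ)
    (F : EuclideanSpace ℝ (Fin N) → EuclideanSpace ℝ (Fin N))
    (v vdot vddot ebar : EuclideanSpace ℝ (Fin N))
    (hF : DifferentiableAt ℝ F v) (σ μ : ℝ)
    (ψ : ℝ → ℝ)
    (hψ : ∀ α : ℝ, ψ α =
      ‖F (v - Real.sin α • vdot + (1 - Real.cos α) • vddot)‖ ^ 2) :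
    HasDerivAt ψ (-2 * ⟪F v, fderiv ℝ F v vdot⟫) 0 ∧
    (fderiv ℝ F v vdot = F v - (σ * μ) • ebar →
      ⟪F v, ebar⟫ = p * μ →
      deriv ψ 0 = -2 * (‖F v‖ ^ 2 - σ * p * μ ^ 2) ∧
      ((p : ℝ) * μ ^ 2 ≤ ‖F v‖ ^ 2 → σ ∈ Set.Ioo (0 : ℝ) 1 →
        deriv ψ 0 ≤ -2 * (‖F v‖ ^ 2 * (1 - σ)))) := by
  have hψ' : HasDerivAt ψ (-2 * ⟪F v, fderiv ℝ F v vdot⟫) 0 := by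
    rw [show ψ = _ from funext hψ]
    exact hasDerivAt_norm_sq_comp_ellipsoidalArc_zero hF.hasFDerivAt vdot vddot
  refine ⟨hψ', fun hNewton hFe => ?_⟩
  have hderiv : deriv ψ 0 = -2 * (‖F v‖ ^ 2 - σ * p * μ ^ 2) := by
    rw [hψ'.deriv, hNewton, real_inner_sub_smul_of_inner_eq σ hFe]
  refine ⟨hderiv, fun hCS hσ => ?_⟩
  rw [hderiv]
  nlinarith [hσ.1]

/-- Derivative at `α = 0` of the merit function `ψ(α) = ‖F(v − v̇ sin α + v̈(1 − cos α))‖²`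
along the arc: `ψ'(0) = −2⟨F(v), F'(v)v̇⟩`; if moreover `F'(v)v̇ = F(v) − σμē` with
`⟨F(v), ē⟩ = pμ`, then `ψ'(0) = −2(‖F(v)‖² − σpμ²)`, and if additionally
`pμ² ≤ ‖F(v)‖²` and `σ ∈ (0,1)`, then `ψ'(0) ≤ −2‖F(v)‖²(1 − σ)`. -/
theorem merit_directional_derivative (N p : ℕ) (hN : 1 ≤ N) (hp : 1 ≤ p)
    (F : EuclideanSpace ℝ (Fin N) → EuclideanSpace ℝ (Fin N))
    (v vdot vddot ebar : EuclideanSpace ℝ (Fin N))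
    (hF : DifferentiableAt ℝ F v) (σ μ : ℝ)
    (ψ : ℝ → ℝ)
    (hψ : ∀ α : ℝ, ψ α =
      ‖F (v - Real.sin α • vdot + (1 - Real.cos α) • vddot)‖ ^ 2) :
    HasDerivAt ψ (-2 * ⟪F v, fderiv ℝ F v vdot⟫) 0 ∧
    (fderiv ℝ F v vdot = F v - (σ * μ) • ebar →
      ⟪F v, ebar⟫ = p * μ →
      deriv ψ 0 = -2 * (‖F v‖ ^ 2 - σ * p * μ ^ 2) ∧
      ((p : ℝ) * μ ^ 2 ≤ ‖F v‖ ^ 2 → σ ∈ Set.Ioo (0 : ℝ) 1 →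
        deriv ψ 0 ≤ -2 * (‖F v‖ ^ 2 * (1 - σ)))) :=
  merit_directional_derivative_general N p F v vdot vddot ebar hF σ μ ψ hψ
end

section
/- Let z, s, ż, ṡ, z̈, s̈, σ, μ be real numbers satisfying ż s + z ṡ = z s − σμ and z s̈ + s z̈ = −2 ż ṡ. Define z(α) = z − ż sin α + z̈ (1 − cos α) and s(α) = s − ṡ sin α + s̈ (1 − cos α). Then for every α ∈ ℝ, z(α) s(α) = z s (1 − sin α) + σ μ sin α − (ż s̈ + z̈ ṡ) sin α (1 − cos α) + (z̈ s̈ − ż ṡ)(1 − cos α)². -/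
/-! Expanding the product, the first- and second-order equations replace the coefficients of
`sin α` and `1 - cos α`, and `sin² α = 2 (1 - cos α) - (1 - cos α)²` turns the `ż ṡ sin² α` term
into the remaining `ż ṡ` contributions. -/

theorem mul_arc_eq_of_sq_add_one_sub_sq {R : Type*} [CommRing R]
    {z s zdot sdot zddot sddot c a b : R}
    (h1 : zdot * s + z * sdot = z * s - c)
    (h2 : z * sddot + s * zddot = -2 * zdot * sdot)
    (hab : a ^ 2 + (1 - b) ^ 2 = 1) :
    (z - zdot * a + zddot * b) * (s - sdot * a + sddot * b) =
      z * s * (1 - a) + c * a - (zdot * sddot + zddot * sdot) * a * b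
        + (zddot * sddot - zdot * sdot) * b ^ 2 := by
  linear_combination (-a) * h1 + b * h2 + (zdot * sdot) * hab

/-- Componentwise complementarity product along the arc:
if `ż s + z ṡ = z s − σμ` and `z s̈ + s z̈ = −2 ż ṡ`, then
`z(α) s(α) = z s (1 − sin α) + σμ sin α − (ż s̈ + z̈ ṡ) sin α (1 − cos α)
+ (z̈ s̈ − ż ṡ)(1 − cos α)²`. -/
theorem complementarity_along_arc (z s zdot sdot zddot sddot σ μ : ℝ)
    (h1 : zdot * s + z * sdot = z * s - σ * μ)
    (h2 : z * sddot + s * zddot = -2 * zdot * sdot) :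
    ∀ α : ℝ,
      (z - zdot * Real.sin α + zddot * (1 - Real.cos α)) *
        (s - sdot * Real.sin α + sddot * (1 - Real.cos α)) =
      z * s * (1 - Real.sin α) + σ * μ * Real.sin α
        - (zdot * sddot + zddot * sdot) * Real.sin α * (1 - Real.cos α)
        + (zddot * sddot - zdot * sdot) * (1 - Real.cos α) ^ 2 := by
  intro α
  refine mul_arc_eq_of_sq_add_one_sub_sq h1 h2 ?_
  rw [sub_sub_cancel]
  exact Real.sin_sq_add_cos_sq α
end

section
/- Let f : ℝⁿ → ℝ, h : ℝⁿ → ℝᵐ, g : ℝⁿ → ℝᵖ (p ≥ 1) be continuously differentiable. For v = (x,y,w,s,z) ∈ ℝⁿ×ℝᵐ×ℝᵖ×ℝᵖ×ℝᵖ, set F(v) = (∇f(x) + ∇h(x)y − ∇g(x)w, h(x), g(x) − s, w − z, (z₁s₁,…,z_p s_p)) and φ(v) = ‖F(v)‖². Let ε > 0 and let v⁰ = (x⁰,y⁰,w⁰,s⁰,z⁰) satisfy φ(v⁰) > 0 and z_i⁰ s_i⁰ > 0 for all i. Let {v^k = (x^k, y^k, w^k, s^k, z^k)} be a sequence such that,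 for every k: w^k = z^k; all entries of w^k, s^k, z^k are positive; ε ≤ φ(v^k) ≤ φ(v⁰); and min_i z_i^k s_i^k ≥ (1/2) (min_i z_i⁰ s_i⁰) φ(v^k)/φ(v⁰). Assume: (i) the sequence {x^k} is bounded; (ii) for every x in the closure of {x^k : k ∈ ℕ}, the columns of ∇h(x) are linearly independent; (iii) for every accumulation point (x̂, ŝ) of {(x^k, s^k)}, the family of vectors {∇h_j(x̂) : 1 ≤ j ≤ m} ∪ {∇g_i(x̂) : 1 ≤ i ≤ p, ŝ_i = 0} is linearly independent. Then the sequence {v^k} is bounded, and there exists a constant c > 0 such that w_i^k ≥ c, s_i^k ≥ c and z_i^k ≥ c for all k and all i. -/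
open scoped BigOperators

open Filter Topology Bornology

private lemma sum5_le {a b c d e M : ℝ} (hle : a + b + c + d + e ≤ M)
    (ha : 0 ≤ a) (hb : 0 ≤ b) (hc : 0 ≤ c) (hd : 0 ≤ d) (he : 0 ≤ e) :
    a ≤ M ∧ c ≤ M ∧ e ≤ M :=
  ⟨by linarith, by linarith, by linarith⟩

private lemma abs_le_sqrt_of_sum_sq_le {ι : Type*} [Fintype ι] {f : ι → ℝ} {M : ℝ}
    (hle : ∑ i, (f i) ^ 2 ≤ M) (i : ι) : |f i| ≤ Real.sqrt M := by
  have h1 : (f i) ^ 2 ≤ M :=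
    le_trans (Finset.single_le_sum (fun j _ => sq_nonneg (f j)) (Finset.mem_univ i)) hle
  rw [← Real.sqrt_sq_eq_abs]
  exact Real.sqrt_le_sqrt h1

/-- Boundedness of the iterates of the arc-search interior-point method:
if every iterate `vᵏ = (xᵏ, yᵏ, wᵏ, sᵏ, zᵏ)` lies in `Ω(ε)`, `wᵏ = zᵏ`, the components of
`wᵏ, sᵏ, zᵏ` are positive, `{xᵏ}` is bounded, the columns of `∇h` are linearly independent
on the closure of `{xᵏ}`, and at every accumulation point `(x̂, ŝ)` the equality-constraint
gradients together with the active inequality-constraint gradients are linearly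
independent, then `{vᵏ}` is bounded and the components of `wᵏ, sᵏ, zᵏ` are bounded
below and away from zero. -/
theorem iterates_bounded (n m p : ℕ) (hp : 1 ≤ p)
    (f : (Fin n → ℝ) → ℝ) (h : (Fin n → ℝ) → (Fin m → ℝ))
    (g : (Fin n → ℝ) → (Fin p → ℝ))
    (hf : ContDiff ℝ 1 f) (hh : ContDiff ℝ 1 h) (hg : ContDiff ℝ 1 g)
    -- the merit function φ(v) = ‖F(v)‖²
    (φ : (Fin n → ℝ) → (Fin m → ℝ) → (Fin p → ℝ) → (Fin p → ℝ) → (Fin p → ℝ) → ℝ)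
    (hφ : ∀ x y w s z, φ x y w s z =
      (∑ i, (fderiv ℝ f x (Pi.single i 1)
          + ∑ j, y j * fderiv ℝ h x (Pi.single i 1) j
          - ∑ j, w j * fderiv ℝ g x (Pi.single i 1) j) ^ 2)
        + (∑ j, (h x j) ^ 2) + (∑ i, (g x i - s i) ^ 2)
        + (∑ i, (w i - z i) ^ 2) + (∑ i, (z i * s i) ^ 2))
    (ε : ℝ) (hε : 0 < ε)
    -- the initial point v⁰
    (x0 : Fin n → ℝ) (y0 : Fin m → ℝ) (w0 s0 z0 : Fin p → ℝ)
    (hφ0 : 0 < φ x0 y0 w0 s0 z0)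
    (hzs0 : ∀ i, 0 < z0 i * s0 i)
    -- the sequence of iterates
    (xk : ℕ → Fin n → ℝ) (yk : ℕ → Fin m → ℝ) (wk sk zk : ℕ → Fin p → ℝ)
    (hwz : ∀ k, wk k = zk k)
    (hpos : ∀ k i, 0 < wk k i ∧ 0 < sk k i ∧ 0 < zk k i)
    (hφlo : ∀ k, ε ≤ φ (xk k) (yk k) (wk k) (sk k) (zk k))
    (hφhi : ∀ k, φ (xk k) (yk k) (wk k) (sk k) (zk k) ≤ φ x0 y0 w0 s0 z0)
    (hmin : ∀ k i, (1 / 2) * (⨅ j, z0 j * s0 j) *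
        (φ (xk k) (yk k) (wk k) (sk k) (zk k) / φ x0 y0 w0 s0 z0)
        ≤ zk k i * sk k i)
    -- (i) boundedness of {xᵏ}
    (hxbdd : Bornology.IsBounded (Set.range xk))
    -- (ii) columns of ∇h linearly independent on the closure of {xᵏ}
    (hB1 : ∀ x ∈ closure (Set.range xk),
      LinearIndependent ℝ
        (fun j : Fin m => fun i : Fin n => fderiv ℝ h x (Pi.single i 1) j))
    -- (iii) linear independence of active gradients at accumulation points
    (hB4 : ∀ (xhat : Fin n → ℝ) (shat : Fin p → ℝ),
      MapClusterPt (xhat, shat) Filter.atTop (fun k => (xk k, sk k)) →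
      LinearIndependent ℝ (Sum.elim
        (fun j : Fin m => fun i : Fin n => fderiv ℝ h xhat (Pi.single i 1) j)
        (fun jp : {i : Fin p // shat i = 0} =>
          fun i : Fin n => fderiv ℝ g xhat (Pi.single i 1) jp.1))) :
    Bornology.IsBounded
      (Set.range (fun k => (xk k, yk k, wk k, sk k, zk k))) ∧
    ∃ c > 0, ∀ k i, c ≤ wk k i ∧ c ≤ sk k i ∧ c ≤ zk k i := by
  classical
  have i0 : Fin p := ⟨0, hp⟩
  haveI : Nonempty (Fin p) := ⟨i0⟩
  set M := φ x0 y0 w0 s0 z0 with hMdef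
  have hM : 0 < M := hφ0
  set Q := Real.sqrt M with hQdef
  have hQ0 : 0 ≤ Q := Real.sqrt_nonneg M
  -- key componentwise bounds from `φ ≤ M`
  have key : ∀ k, (∀ i, |fderiv ℝ f (xk k) (Pi.single i 1)
          + ∑ j, yk k j * fderiv ℝ h (xk k) (Pi.single i 1) j
          - ∑ j, zk k j * fderiv ℝ g (xk k) (Pi.single i 1) j| ≤ Q)
      ∧ (∀ i, |g (xk k) i - sk k i| ≤ Q) ∧ (∀ i, zk k i * sk k i ≤ Q) := by
    intro k
    have hk := hφhi k
    rw [hφ, hwz k] at hk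
    obtain ⟨h1, h3, h5⟩ := sum5_le hk (by positivity) (by positivity) (by positivity)
      (by positivity) (by positivity)
    exact ⟨fun i => abs_le_sqrt_of_sum_sq_le h1 i,
      fun i => abs_le_sqrt_of_sum_sq_le h3 i,
      fun i => le_trans (le_abs_self _) (abs_le_sqrt_of_sum_sq_le h5 i)⟩
  -- the closure of the range of xk is compact
  have hCcpt : IsCompact (closure (Set.range xk)) := hxbdd.isCompact_closure
  have hxC : ∀ k, xk k ∈ closure (Set.range xk) := fun k => subset_closure ⟨k, rfl⟩
  -- bound on g on that compact
  obtain ⟨G, hG⟩ := hCcpt.exists_bound_of_continuousOn hg.continuous.continuousOn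
  have hgb : ∀ k i, |g (xk k) i| ≤ G := by
    intro k i
    have h1 := norm_le_pi_norm (g (xk k)) i
    have h2 := hG (xk k) (hxC k)
    rw [Real.norm_eq_abs] at h1
    linarith
  -- upper bound on s
  set Sb := G + Q with hSbdef
  have hSb : ∀ k i, sk k i ≤ Sb := by
    intro k i
    have h1 := abs_le.mp (hgb k i)
    have h2 := abs_le.mp ((key k).2.1 i)
    have := h2.1
    simp only [hSbdef]
    linarith [h1.2]
  have hSb0 : 0 < Sb := lt_of_lt_of_le (hpos 0 i0).2.1 (hSb 0 i0)
  -- the minimum initial complementarity product is positive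
  obtain ⟨jm, hjm⟩ := Finite.exists_min (fun j => z0 j * s0 j)
  have hinf : 0 < ⨅ j, z0 j * s0 j := lt_of_lt_of_le (hzs0 jm) (le_ciInf hjm)
  set c0 := (1 / 2) * (⨅ j, z0 j * s0 j) * (ε / M) with hc0def
  have hc0 : 0 < c0 :=
    mul_pos (mul_pos (by norm_num) hinf) (div_pos hε hM)
  -- lower bound for the complementarity products
  have hzslo : ∀ k i, c0 ≤ zk k i * sk k i := by
    intro k i
    refine le_trans ?_ (hmin k i)
    have hq : ε / M ≤ φ (xk k) (yk k) (wk k) (sk k) (zk k) / M :=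
      (div_le_div_iff_of_pos_right hM).mpr (hφlo k)
    have hnn : (0:ℝ) ≤ (1 / 2) * (⨅ j, z0 j * s0 j) :=
      le_of_lt (mul_pos (by norm_num) hinf)
    calc c0 = (1 / 2) * (⨅ j, z0 j * s0 j) * (ε / M) := rfl
      _ ≤ (1 / 2) * (⨅ j, z0 j * s0 j) *
          (φ (xk k) (yk k) (wk k) (sk k) (zk k) / M) :=
        mul_le_mul_of_nonneg_left hq hnn
  have hzQ : ∀ k i, zk k i * sk k i ≤ Q := fun k i => (key k).2.2 i
  -- lower bound for z
  have hzlo : ∀ k i, c0 / Sb ≤ zk k i := by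
    intro k i
    rw [div_le_iff₀ hSb0]
    calc c0 ≤ zk k i * sk k i := hzslo k i
      _ ≤ zk k i * Sb := by nlinarith [(hpos k i).2.2, hSb k i]
  -- upper bound for (y, z): the crucial compactness/linear-independence argument
  have hu : ∃ R : ℝ, ∀ k, ‖((yk k, zk k) : (Fin m → ℝ) × (Fin p → ℝ))‖ ≤ R := by
    by_contra hcon
    push_neg at hcon
    set u : ℕ → (Fin m → ℝ) × (Fin p → ℝ) := fun k => (yk k, zk k) with hudef
    choose ψ hψ using fun nn : ℕ => hcon ((nn : ℝ) + ∑ j ∈ Finset.range (nn + 1), ‖u j‖)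
    have hψnorm : ∀ nn : ℕ, (nn : ℝ) < ‖u (ψ nn)‖ := by
      intro nn
      have hs : 0 ≤ ∑ j ∈ Finset.range (nn + 1), ‖u j‖ :=
        Finset.sum_nonneg fun j _ => norm_nonneg _
      linarith [hψ nn]
    have hψgt : ∀ nn, nn < ψ nn := by
      intro nn
      by_contra hle
      push_neg at hle
      have h1 : ‖u (ψ nn)‖ ≤ ∑ j ∈ Finset.range (nn + 1), ‖u j‖ :=
        Finset.single_le_sum (fun j _ => norm_nonneg (u j))
          (Finset.mem_range.mpr (Nat.lt_succ_of_le hle))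
      have h2 := hψ nn
      have h3 : (0:ℝ) ≤ nn := Nat.cast_nonneg nn
      linarith
    have hune : ∀ nn, u (ψ nn) ≠ 0 := by
      intro nn h0
      have h1 := hψnorm nn
      rw [h0, norm_zero] at h1
      exact absurd h1 (show (0:ℝ) ≤ nn from Nat.cast_nonneg nn).not_gt
    have hnormed : ∀ nn, ‖‖u (ψ nn)‖⁻¹ • u (ψ nn)‖ = (1:ℝ) := by
      intro nn
      rw [norm_smul, norm_inv, norm_norm]
      exact inv_mul_cancel₀ (norm_ne_zero_iff.mpr (hune nn))
    have hmem : ∀ nn : ℕ, ((xk (ψ nn), sk (ψ nn), ‖u (ψ nn)‖⁻¹ • u (ψ nn)) :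
        (Fin n → ℝ) × (Fin p → ℝ) × ((Fin m → ℝ) × (Fin p → ℝ))) ∈
        (closure (Set.range xk)) ×ˢ (Metric.closedBall (0 : Fin p → ℝ) Sb ×ˢ
          Metric.closedBall (0 : (Fin m → ℝ) × (Fin p → ℝ)) 1) := by
      intro nn
      refine Set.mem_prod.mpr ⟨hxC _, Set.mem_prod.mpr ⟨?_, ?_⟩⟩
      · rw [Metric.mem_closedBall, dist_zero_right, pi_norm_le_iff_of_nonneg hSb0.le]
        intro i
        rw [Real.norm_eq_abs, abs_le]
        exact ⟨by linarith [(hpos (ψ nn) i).2.1], hSb (ψ nn) i⟩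
      · rw [Metric.mem_closedBall, dist_zero_right, hnormed nn]
    have hbddset : Bornology.IsBounded ((closure (Set.range xk)) ×ˢ
        (Metric.closedBall (0 : Fin p → ℝ) Sb ×ˢ
          Metric.closedBall (0 : (Fin m → ℝ) × (Fin p → ℝ)) 1)) :=
      hxbdd.closure.prod (Metric.isBounded_closedBall.prod Metric.isBounded_closedBall)
    obtain ⟨ahat, -, θ, hθ, hconv⟩ := tendsto_subseq_of_bounded hbddset hmem
    obtain ⟨xh, sh, yh, zh⟩ := ahat
    set χ : ℕ → ℕ := fun nn => ψ (θ nn) with hχdef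
    have hχtop : Tendsto χ atTop atTop :=
      tendsto_atTop_mono (fun nn => le_trans (hθ.id_le nn) (hψgt (θ nn)).le) tendsto_id
    have hxconv : Tendsto (fun nn => xk (χ nn)) atTop (𝓝 xh) :=
      (continuous_fst.tendsto _).comp hconv
    have hsconv : Tendsto (fun nn => sk (χ nn)) atTop (𝓝 sh) :=
      ((continuous_fst.comp continuous_snd).tendsto _).comp hconv
    have hnconv : Tendsto (fun nn => ‖u (χ nn)‖⁻¹ • u (χ nn)) atTop
        (𝓝 ((yh, zh) : (Fin m → ℝ) × (Fin p → ℝ))) :=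
      ((continuous_snd.comp continuous_snd).tendsto _).comp hconv
    set t : ℕ → ℝ := fun nn => ‖u (χ nn)‖⁻¹ with htdef
    have hupos : ∀ nn, 0 < ‖u (χ nn)‖ := fun nn =>
      lt_of_le_of_lt (Nat.cast_nonneg (θ nn)) (hψnorm (θ nn))
    have ht0 : ∀ nn, 0 ≤ t nn := fun nn => inv_nonneg.mpr (norm_nonneg _)
    have hutop : Tendsto (fun nn => ‖u (χ nn)‖) atTop atTop := by
      have h1 : ∀ nn : ℕ, (nn : ℝ) ≤ ‖u (χ nn)‖ := fun nn =>
        le_trans (Nat.cast_le.mpr (hθ.id_le nn)) (hψnorm (θ nn)).le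
      exact tendsto_atTop_mono h1 tendsto_natCast_atTop_atTop
    have htzero : Tendsto t atTop (𝓝 0) := tendsto_inv_atTop_zero.comp hutop
    have hyn : ∀ j, Tendsto (fun nn => t nn * yk (χ nn) j) atTop (𝓝 (yh j)) := by
      intro j
      have h1 : Tendsto (fun nn => (‖u (χ nn)‖⁻¹ • u (χ nn)).1 j) atTop (𝓝 (yh j)) :=
        ((continuous_apply j).tendsto _).comp ((continuous_fst.tendsto _).comp hnconv)
      exact h1.congr fun nn => by simp [hudef, htdef]
    have hzn : ∀ j, Tendsto (fun nn => t nn * zk (χ nn) j) atTop (𝓝 (zh j)) := by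
      intro j
      have h1 : Tendsto (fun nn => (‖u (χ nn)‖⁻¹ • u (χ nn)).2 j) atTop (𝓝 (zh j)) :=
        ((continuous_apply j).tendsto _).comp ((continuous_snd.tendsto _).comp hnconv)
      exact h1.congr fun nn => by simp [hudef, htdef]
    have hnorm1 : ‖((yh, zh) : (Fin m → ℝ) × (Fin p → ℝ))‖ = 1 := by
      have h1 : Tendsto (fun nn => ‖‖u (χ nn)‖⁻¹ • u (χ nn)‖) atTop
          (𝓝 ‖((yh, zh) : (Fin m → ℝ) × (Fin p → ℝ))‖) :=
        (continuous_norm.tendsto _).comp hnconv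
      have h2 : ∀ nn, ‖‖u (χ nn)‖⁻¹ • u (χ nn)‖ = (1:ℝ) := fun nn => hnormed (θ nn)
      exact tendsto_nhds_unique (h1.congr h2) tendsto_const_nhds
    have hclust : MapClusterPt (xh, sh) Filter.atTop (fun k => (xk k, sk k)) :=
      MapClusterPt.of_comp hχtop ((hxconv.prodMk_nhds hsconv).mapClusterPt)
    have hshnn : ∀ j, 0 ≤ sh j := by
      intro j
      have hsj : Tendsto (fun nn => sk (χ nn) j) atTop (𝓝 (sh j)) :=
        ((continuous_apply j).tendsto _).comp hsconv
      exact ge_of_tendsto' hsj fun nn => (hpos (χ nn) j).2.1.le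
    have hinact : ∀ j, sh j ≠ 0 → zh j = 0 := by
      intro j hjne
      have hsj : Tendsto (fun nn => sk (χ nn) j) atTop (𝓝 (sh j)) :=
        ((continuous_apply j).tendsto _).comp hsconv
      have hlim : Tendsto (fun nn => t nn * Q / sk (χ nn) j) atTop (𝓝 (0 * Q / sh j)) :=
        (htzero.mul_const Q).div hsj hjne
      have hub : ∀ nn, t nn * zk (χ nn) j ≤ t nn * Q / sk (χ nn) j := by
        intro nn
        have hsp := (hpos (χ nn) j).2.1
        rw [le_div_iff₀ hsp]
        have := hzQ (χ nn) j
        nlinarith [ht0 nn, (hpos (χ nn) j).2.2]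
      have hlb : ∀ nn, 0 ≤ t nn * zk (χ nn) j := fun nn =>
        mul_nonneg (ht0 nn) (hpos (χ nn) j).2.2.le
      have h0 : Tendsto (fun nn => t nn * zk (χ nn) j) atTop (𝓝 0) := by
        refine squeeze_zero hlb hub ?_
        simpa using hlim
      exact tendsto_nhds_unique (hzn j) h0
    -- continuity of the derivatives
    have hDfc : ∀ i : Fin n, Continuous fun x => fderiv ℝ f x (Pi.single i 1) := fun i =>
      (hf.continuous_fderiv_apply one_ne_zero).comp (continuous_id.prodMk continuous_const)
    have hDhc : ∀ (i : Fin n) (j : Fin m),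
        Continuous fun x => fderiv ℝ h x (Pi.single i 1) j := fun i j =>
      (continuous_apply j).comp
        ((hh.continuous_fderiv_apply one_ne_zero).comp (continuous_id.prodMk continuous_const))
    have hDgc : ∀ (i : Fin n) (j : Fin p),
        Continuous fun x => fderiv ℝ g x (Pi.single i 1) j := fun i j =>
      (continuous_apply j).comp
        ((hg.continuous_fderiv_apply one_ne_zero).comp (continuous_id.prodMk continuous_const))
    -- the limit identity
    have heq : ∀ i : Fin n,
        (0:ℝ) = 0 * fderiv ℝ f xh (Pi.single i 1)
          + ∑ j, yh j * fderiv ℝ h xh (Pi.single i 1) j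
          - ∑ j, zh j * fderiv ℝ g xh (Pi.single i 1) j := by
      intro i
      set L : ℕ → ℝ := fun nn => t nn * (fderiv ℝ f (xk (χ nn)) (Pi.single i 1)
          + ∑ j, yk (χ nn) j * fderiv ℝ h (xk (χ nn)) (Pi.single i 1) j
          - ∑ j, zk (χ nn) j * fderiv ℝ g (xk (χ nn)) (Pi.single i 1) j) with hLdef
      have hL0 : Tendsto L atTop (𝓝 0) := by
        refine squeeze_zero_norm (fun nn => ?_) (by simpa using htzero.mul_const Q)
        rw [Real.norm_eq_abs, hLdef, abs_mul, abs_of_nonneg (ht0 nn)]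
        exact mul_le_mul_of_nonneg_left ((key (χ nn)).1 i) (ht0 nn)
      have hterm1 : Tendsto (fun nn => t nn * fderiv ℝ f (xk (χ nn)) (Pi.single i 1))
          atTop (𝓝 (0 * fderiv ℝ f xh (Pi.single i 1))) :=
        htzero.mul (((hDfc i).tendsto _).comp hxconv)
      have hterm2 : Tendsto
          (fun nn => ∑ j, (t nn * yk (χ nn) j) * fderiv ℝ h (xk (χ nn)) (Pi.single i 1) j)
          atTop (𝓝 (∑ j, yh j * fderiv ℝ h xh (Pi.single i 1) j)) :=
        tendsto_finset_sum _ fun j _ => (hyn j).mul (((hDhc i j).tendsto _).comp hxconv)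
      have hterm3 : Tendsto
          (fun nn => ∑ j, (t nn * zk (χ nn) j) * fderiv ℝ g (xk (χ nn)) (Pi.single i 1) j)
          atTop (𝓝 (∑ j, zh j * fderiv ℝ g xh (Pi.single i 1) j)) :=
        tendsto_finset_sum _ fun j _ => (hzn j).mul (((hDgc i j).tendsto _).comp hxconv)
      have hL1 : Tendsto L atTop (𝓝 (0 * fderiv ℝ f xh (Pi.single i 1)
          + ∑ j, yh j * fderiv ℝ h xh (Pi.single i 1) j
          - ∑ j, zh j * fderiv ℝ g xh (Pi.single i 1) j)) := by
        refine ((hterm1.add hterm2).sub hterm3).congr fun nn => ?_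
        rw [hLdef]
        simp only [mul_add, mul_sub, Finset.mul_sum, mul_assoc]
      exact tendsto_nhds_unique hL0 hL1
    -- use linear independence of the active gradients
    have hLI := hB4 xh sh hclust
    rw [Fintype.linearIndependent_iff] at hLI
    set cf : (Fin m ⊕ {i : Fin p // sh i = 0}) → ℝ :=
      Sum.elim yh (fun jp => -zh jp.1) with hcfdef
    have hsum0 : ∑ idx, cf idx • (Sum.elim
        (fun j : Fin m => fun i : Fin n => fderiv ℝ h xh (Pi.single i 1) j)
        (fun jp : {i : Fin p // sh i = 0} =>
          fun i : Fin n => fderiv ℝ g xh (Pi.single i 1) jp.1)) idx = 0 := by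
      funext i
      simp only [Finset.sum_apply, Pi.smul_apply, smul_eq_mul, Pi.zero_apply]
      rw [Fintype.sum_sum_type]
      simp only [hcfdef, Sum.elim_inl, Sum.elim_inr]
      have hz : ∑ jp : {i : Fin p // sh i = 0}, zh jp.1 * fderiv ℝ g xh (Pi.single i 1) jp.1
          = ∑ j, zh j * fderiv ℝ g xh (Pi.single i 1) j := by
        rw [← Finset.sum_subtype (Finset.univ.filter fun j => sh j = 0)
          (fun j => by simp) (fun j => zh j * fderiv ℝ g xh (Pi.single i 1) j)]
        refine Finset.sum_subset (Finset.filter_subset _ _) ?_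
        intro x _ hxnot
        have hx : sh x ≠ 0 := by simpa using hxnot
        rw [hinact x hx, zero_mul]
      have h2 : ∑ jp : {i : Fin p // sh i = 0},
          (-zh jp.1) * fderiv ℝ g xh (Pi.single i 1) jp.1
          = -(∑ j, zh j * fderiv ℝ g xh (Pi.single i 1) j) := by
        rw [← hz, ← Finset.sum_neg_distrib]
        refine Finset.sum_congr rfl fun jp _ => by ring
      rw [h2]
      have h3 := heq i
      linarith
    have hy0 : ∀ j, yh j = 0 := fun j => hLI cf hsum0 (Sum.inl j)
    have hz0 : ∀ j, zh j = 0 := by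
      intro j
      by_cases hj : sh j = 0
      · have h1 := hLI cf hsum0 (Sum.inr ⟨j, hj⟩)
        simpa [hcfdef, neg_eq_zero] using h1
      · exact hinact j hj
    have hyz0 : ((yh, zh) : (Fin m → ℝ) × (Fin p → ℝ)) = 0 := by
      have h1 : yh = 0 := funext hy0
      have h2 : zh = 0 := funext hz0
      rw [h1, h2]
      rfl
    rw [hyz0, norm_zero] at hnorm1
    exact absurd hnorm1 (by norm_num)
  obtain ⟨R0, hR0⟩ := hu
  set R := max R0 1 with hRdef
  have hRpos : (0:ℝ) < R := lt_of_lt_of_le one_pos (le_max_right _ _)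
  have hyub : ∀ k, ‖yk k‖ ≤ R := fun k =>
    le_trans (le_trans (norm_fst_le ((yk k, zk k) : (Fin m → ℝ) × (Fin p → ℝ))) (hR0 k))
      (le_max_left _ _)
  have hzub : ∀ k i, zk k i ≤ R := by
    intro k i
    have h1 : |zk k i| ≤ ‖zk k‖ := by
      simpa [Real.norm_eq_abs] using norm_le_pi_norm (zk k) i
    have h2 : ‖zk k‖ ≤ R :=
      le_trans (le_trans (norm_snd_le ((yk k, zk k) : (Fin m → ℝ) × (Fin p → ℝ))) (hR0 k))
        (le_max_left _ _)
    linarith [le_abs_self (zk k i)]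
  -- lower bound for s
  have hslo : ∀ k i, c0 / R ≤ sk k i := by
    intro k i
    rw [div_le_iff₀ hRpos]
    calc c0 ≤ zk k i * sk k i := hzslo k i
      _ = sk k i * zk k i := mul_comm _ _
      _ ≤ sk k i * R := by nlinarith [(hpos k i).2.1, hzub k i]
  constructor
  · -- boundedness of the whole sequence
    set T := max R Sb with hTdef
    have hT0 : 0 ≤ T := le_trans hRpos.le (le_max_left _ _)
    have hsub : Set.range (fun k => (xk k, yk k, wk k, sk k, zk k)) ⊆
        (Set.range xk) ×ˢ (Metric.closedBall 0 T ×ˢ (Metric.closedBall 0 T ×ˢ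
          (Metric.closedBall 0 T ×ˢ Metric.closedBall 0 T))) := by
      rintro v ⟨k, rfl⟩
      have hy : ‖yk k‖ ≤ T := (hyub k).trans (le_max_left _ _)
      have hzn : ‖zk k‖ ≤ T := by
        rw [pi_norm_le_iff_of_nonneg hT0]
        intro i
        rw [Real.norm_eq_abs, abs_le]
        constructor
        · linarith [(hpos k i).2.2]
        · exact (hzub k i).trans (le_max_left _ _)
      have hsn : ‖sk k‖ ≤ T := by
        rw [pi_norm_le_iff_of_nonneg hT0]
        intro i
        rw [Real.norm_eq_abs, abs_le]
        constructor
        · linarith [(hpos k i).2.1]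
        · exact (hSb k i).trans (le_max_right _ _)
      have hwn : ‖wk k‖ ≤ T := by rw [hwz k]; exact hzn
      simp only [Set.mem_prod, Metric.mem_closedBall, dist_zero_right]
      exact ⟨⟨k, rfl⟩, hy, hwn, hsn, hzn⟩
    exact Bornology.IsBounded.subset
      (hxbdd.prod (Metric.isBounded_closedBall.prod (Metric.isBounded_closedBall.prod
        (Metric.isBounded_closedBall.prod Metric.isBounded_closedBall)))) hsub
  · refine ⟨min (c0 / Sb) (c0 / R),
      lt_min (div_pos hc0 hSb0) (div_pos hc0 hRpos), fun k i => ?_⟩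
    refine ⟨?_, le_trans (min_le_right _ _) (hslo k i),
      le_trans (min_le_left _ _) (hzlo k i)⟩
    rw [hwz k]
    exact le_trans (min_le_left _ _) (hzlo k i)
end

section
/- Let n, m, p ≥ 1. Let H be an n×n real matrix, A an n×m real matrix, G an n×p real matrix, and s, z ∈ ℝᵖ with all entries of s and z positive. Write D(u) for the p×p diagonal matrix with diagonal u. Assume that L̄ := H + G D(s)⁻¹ D(z) Gᵀ is invertible and that H̄ := Aᵀ L̄⁻¹ A is invertible. Then the (n+m+3p)×(n+m+3p) block matrix [[H, A, −G, 0, 0], [Aᵀ, 0, 0, 0, 0], [Gᵀ, 0, 0, −I_p, 0], [0, 0, I_p, 0, −I_p], [0, 0, 0, D(z), D(s)]] is invertible. -/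
open Matrix

lemma mulVec_eq_zero_of_isUnit {k : Type*} [Fintype k] [DecidableEq k]
    {M : Matrix k k ℝ} (h : IsUnit M) {x : k → ℝ} (hx : M *ᵥ x = 0) : x = 0 := by
  have h2 := congrArg (fun w => M⁻¹ *ᵥ w) hx
  simpa [Matrix.mulVec_mulVec,
    Matrix.nonsing_inv_mul M ((Matrix.isUnit_iff_isUnit_det M).mp h)] using h2

/-- Nonsingularity of the KKT Jacobian at an interior point with positive `s, z`, assuming
`L̄ = H + G D(s)⁻¹ D(z) Gᵀ` and `H̄ = Aᵀ L̄⁻¹ A` are invertible. -/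
theorem kkt_jacobian_nonsingular_interior
    (n m p : ℕ) (hn : 1 ≤ n) (hm : 1 ≤ m) (hp : 1 ≤ p)
    (H : Matrix (Fin n) (Fin n) ℝ) (A : Matrix (Fin n) (Fin m) ℝ)
    (G : Matrix (Fin n) (Fin p) ℝ) (s z : Fin p → ℝ)
    (hs : ∀ i, 0 < s i) (hz : ∀ i, 0 < z i)
    (hL : IsUnit (H + G * (Matrix.diagonal s)⁻¹ * Matrix.diagonal z * Gᵀ))
    (hH : IsUnit (Aᵀ *
      (H + G * (Matrix.diagonal s)⁻¹ * Matrix.diagonal z * Gᵀ)⁻¹ * A)) :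
    IsUnit (KKTmat n m p H A G s z) := by
  have hds : IsUnit (Matrix.diagonal s) :=
    Matrix.isUnit_diagonal.mpr
      ⟨⟨s, fun i => (s i)⁻¹, funext fun i => mul_inv_cancel₀ (hs i).ne',
        funext fun i => inv_mul_cancel₀ (hs i).ne'⟩, rfl⟩
  rw [Matrix.isUnit_iff_isUnit_det, isUnit_iff_ne_zero]
  intro hdet
  rw [← Matrix.exists_mulVec_eq_zero_iff] at hdet
  obtain ⟨v, hv0, hv⟩ := hdet
  set x : Fin n → ℝ := fun i => v (Sum.inl i) with hxdef
  set y : Fin m → ℝ := fun i => v (Sum.inr (Sum.inl i)) with hydef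
  set a : Fin p → ℝ := fun i => v (Sum.inr (Sum.inr (Sum.inl i))) with hadef
  set b : Fin p → ℝ := fun i => v (Sum.inr (Sum.inr (Sum.inr (Sum.inl i)))) with hbdef
  set c : Fin p → ℝ := fun i => v (Sum.inr (Sum.inr (Sum.inr (Sum.inr i)))) with hcdef
  have hv' : v = Sum.elim x (Sum.elim y (Sum.elim a (Sum.elim b c))) := by
    funext i
    rcases i with i | i | i | i | i <;> rfl
  rw [hv', KKTmat] at hv
  simp only [Matrix.fromBlocks_mulVec, Matrix.fromCols_mulVec_sumElim,
    Matrix.fromRows_mulVec, Matrix.zero_mulVec, Matrix.neg_mulVec, Matrix.one_mulVec,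
    add_zero, zero_add] at hv
  have e1 : H *ᵥ x + (A *ᵥ y + -(G *ᵥ a)) = 0 := by
    funext i; simpa [Matrix.neg_mulVec, Matrix.one_mulVec] using congrFun hv (Sum.inl i)
  have e2 : Aᵀ *ᵥ x = 0 := by
    funext i; simpa [Matrix.neg_mulVec, Matrix.one_mulVec] using congrFun hv (Sum.inr (Sum.inl i))
  have e3 : Gᵀ *ᵥ x + -b = 0 := by
    funext i; simpa [Matrix.neg_mulVec, Matrix.one_mulVec] using congrFun hv (Sum.inr (Sum.inr (Sum.inl i)))
  have e4 : a + -c = 0 := by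
    funext i; simpa [Matrix.neg_mulVec, Matrix.one_mulVec] using congrFun hv (Sum.inr (Sum.inr (Sum.inr (Sum.inl i))))
  have e5 : Matrix.diagonal z *ᵥ b + Matrix.diagonal s *ᵥ c = 0 := by
    funext i; simpa [Matrix.neg_mulVec, Matrix.one_mulVec] using congrFun hv (Sum.inr (Sum.inr (Sum.inr (Sum.inr i))))
  have hLd : IsUnit (H + G * (Matrix.diagonal s)⁻¹ * Matrix.diagonal z * Gᵀ).det :=
    (Matrix.isUnit_iff_isUnit_det _).mp hL
  have hsd : IsUnit (Matrix.diagonal s).det := (Matrix.isUnit_iff_isUnit_det _).mp hds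
  have hb' : Gᵀ *ᵥ x = b := sub_eq_zero.mp (by rw [sub_eq_add_neg]; exact e3)
  have hc' : a = c := sub_eq_zero.mp (by rw [sub_eq_add_neg]; exact e4)
  have e5' : Matrix.diagonal z *ᵥ (Gᵀ *ᵥ x) + Matrix.diagonal s *ᵥ a = 0 := by
    rw [hb', hc']; exact e5
  have hsa : Matrix.diagonal s *ᵥ a = -(Matrix.diagonal z *ᵥ (Gᵀ *ᵥ x)) :=
    eq_neg_of_add_eq_zero_right e5'
  have ha' : a = (Matrix.diagonal s)⁻¹ *ᵥ (Matrix.diagonal s *ᵥ a) := by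
    rw [Matrix.mulVec_mulVec, Matrix.nonsing_inv_mul _ hsd, Matrix.one_mulVec]
  have hGa : G *ᵥ a = -((G * (Matrix.diagonal s)⁻¹ * Matrix.diagonal z * Gᵀ) *ᵥ x) := by
    rw [ha', hsa]
    simp [Matrix.mulVec_neg, Matrix.mulVec_mulVec, Matrix.mul_assoc]
  have eL : (H + G * (Matrix.diagonal s)⁻¹ * Matrix.diagonal z * Gᵀ) *ᵥ x + A *ᵥ y = 0 := by
    calc (H + G * (Matrix.diagonal s)⁻¹ * Matrix.diagonal z * Gᵀ) *ᵥ x + A *ᵥ y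
        = H *ᵥ x + (A *ᵥ y + -(G *ᵥ a)) := by
          rw [Matrix.add_mulVec, hGa]; abel
      _ = 0 := e1
  have hx' : x = -((H + G * (Matrix.diagonal s)⁻¹ * Matrix.diagonal z * Gᵀ)⁻¹ *ᵥ (A *ᵥ y)) := by
    have h2 := congrArg (fun w => (H + G * (Matrix.diagonal s)⁻¹ * Matrix.diagonal z * Gᵀ)⁻¹ *ᵥ w) eL
    simp only [Matrix.mulVec_add, Matrix.mulVec_mulVec, Matrix.nonsing_inv_mul _ hLd,
      Matrix.one_mulVec, Matrix.mulVec_zero] at h2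
    rw [← Matrix.mulVec_mulVec] at h2
    exact eq_neg_of_add_eq_zero_left h2
  have hy0 : y = 0 := by
    apply mulVec_eq_zero_of_isUnit hH
    have h2 : Aᵀ *ᵥ x = Aᵀ *ᵥ (-((H + G * (Matrix.diagonal s)⁻¹ * Matrix.diagonal z * Gᵀ)⁻¹ *ᵥ (A *ᵥ y))) := by rw [← hx']
    rw [e2] at h2
    have h3 := h2.symm
    simp only [Matrix.mulVec_neg, Matrix.mulVec_mulVec, neg_eq_zero, Matrix.mul_assoc] at h3
    simpa [Matrix.mulVec_mulVec, Matrix.mul_assoc] using h3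
  have hx0 : x = 0 := by
    apply mulVec_eq_zero_of_isUnit hL
    simpa [hy0] using eL
  have ha0 : a = 0 := by
    apply mulVec_eq_zero_of_isUnit hds
    rw [hsa, hx0]; simp
  have hb0 : b = 0 := by rw [← hb', hx0]; simp
  have hc0 : c = 0 := by rw [← hc', ha0]
  apply hv0
  rw [hv', hx0, hy0, ha0, hb0, hc0]
  funext i
  rcases i with i | i | i | i | i <;> rfl
end

section
/- Let δ ∈ (0,1), c > 0 and M > 0, and let {w^k}, {ẇ^k}, {ẅ^k} be sequences of real numbers with w^k ≥ c, |ẇ^k| ≤ M, and |ẅ^k| ≤ M for all k. Then there exists ᾱ ∈ (0, π/2] such that for every k and every α ∈ [0, ᾱ], w^k − ẇ^k sin α + ẅ^k (1 − cos α) ≥ δ w^k. -/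
open Real

theorem abs_mul_one_sub_cos_sub_mul_sin_le {a b M : ℝ} (ha : |a| ≤ M) (hb : |b| ≤ M) (α : ℝ) :
    |b * (1 - cos α) - a * sin α| ≤ 2 * M * |α| := by
  have hM : 0 ≤ M := (abs_nonneg a).trans ha
  have hcos : |1 - cos α| ≤ |α| := by
    simpa using abs_cos_sub_cos_le 0 α
  calc |b * (1 - cos α) - a * sin α|
      ≤ |b| * |1 - cos α| + |a| * |sin α| := by
        simpa only [abs_mul] using abs_sub (b * (1 - cos α)) (a * sin α)
    _ ≤ M * |α| + M * |α| :=
        add_le_add (mul_le_mul hb hcos (abs_nonneg _) hM)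
          (mul_le_mul ha abs_sin_le_abs (abs_nonneg _) hM)
    _ = 2 * M * |α| := by ring

/-- If the components `wᵏ` are bounded below away from zero and the arc derivatives
`ẇᵏ, ẅᵏ` are bounded, then there is a uniform step angle `ᾱ ∈ (0, π/2]` such that
`wᵏ − ẇᵏ sin α + ẅᵏ (1 − cos α) ≥ δ wᵏ` for all `k` and all `α ∈ [0, ᾱ]`. -/
theorem uniform_step_angle (δ c M : ℝ)
    (hδ : δ ∈ Set.Ioo (0 : ℝ) 1) (hc : 0 < c) (hM : 0 < M)
    (w wdot wddot : ℕ → ℝ)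
    (hw : ∀ k, c ≤ w k) (hwdot : ∀ k, |wdot k| ≤ M) (hwddot : ∀ k, |wddot k| ≤ M) :
    ∃ αbar ∈ Set.Ioc (0 : ℝ) (Real.pi / 2),
      ∀ k, ∀ α ∈ Set.Icc (0 : ℝ) αbar,
        δ * w k ≤ w k - wdot k * Real.sin α + wddot k * (1 - Real.cos α) := by
  obtain ⟨-, hδ1⟩ := hδ
  have hgap : 0 < 1 - δ := sub_pos.2 hδ1
  -- The perturbation of `w k` along the arc is at most `2Mα`, which `(1 - δ) c` absorbs.
  refine ⟨min (π / 2) ((1 - δ) * c / (2 * M)), ⟨by positivity, min_le_left _ _⟩, ?_⟩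
  rintro k α ⟨hα0, hα⟩
  have hangle : 2 * M * α ≤ (1 - δ) * c := by
    rw [← le_div_iff₀' (by positivity)]
    exact hα.trans (min_le_right _ _)
  have hperturb := abs_mul_one_sub_cos_sub_mul_sin_le (hwdot k) (hwddot k) α
  rw [abs_of_nonneg hα0] at hperturb
  have hslack : (1 - δ) * c ≤ (1 - δ) * w k := mul_le_mul_of_nonneg_left (hw k) hgap.le
  linarith [(abs_le.1 hperturb).1]
end

section
/- Let c > 0 and M > 0. Then there exists ᾱ ∈ (0, π/2] such that for all real numbers a, b, η₁, η₂, T, β, σ with 0 ≤ a ≤ M, 0 ≤ b ≤ M, |η₁| ≤ M, |η₂| ≤ M, 0 ≤ T, a − T ≥ c, β ∈ (0, 1/2], σ ∈ (0, 1), and for every α ∈ [0, ᾱ]: a(1 − sin α) + b sin α − η₁ sin α (1 − cos α) + η₂ (1 − cos α)² − T(1 − 2β(1−σ) sin α) ≥ 0. -/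
/-!
On `[0, π/2]` both `sin α` and `cos α` are nonnegative, so `sin α + cos α ≥ 1`, i.e.
`0 ≤ 1 - cos α ≤ min 1 (sin α)`. Hence each of `a sin α`, `η₁ sin α (1 - cos α)` and
`η₂ (1 - cos α)²` is at most `M sin α` in absolute value, while the terms `b sin α` and
`T · 2β(1-σ) sin α` are nonnegative. The expression is therefore at least
`(a - T) - 3M sin α ≥ c - 3Mα`, and `ᾱ = min (π/2) (c / (3M))` works.
-/

open Real

theorem one_sub_cos_le_sin {x : ℝ} (hx : x ∈ Set.Icc 0 (π / 2)) : 1 - cos x ≤ sin x := by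
  have hsin : 0 ≤ sin x := sin_nonneg_of_nonneg_of_le_pi hx.1 (by linarith [pi_pos, hx.2])
  have hcos : 0 ≤ cos x := cos_nonneg_of_mem_Icc ⟨by linarith [pi_pos, hx.1], hx.2⟩
  nlinarith [sin_sq_add_cos_sq x, mul_nonneg hsin hcos]

theorem sub_sub_three_mul_le_of_abs_le {a b η₁ η₂ T κ s d M : ℝ} (ha : a ≤ M) (hb : 0 ≤ b)
    (hη₁ : |η₁| ≤ M) (hη₂ : |η₂| ≤ M) (hT : 0 ≤ T) (hκ : 0 ≤ κ) (hs : 0 ≤ s)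
    (hd₀ : 0 ≤ d) (hd₁ : d ≤ 1) (hds : d ≤ s) :
    a - T - 3 * M * s ≤ a * (1 - s) + b * s - η₁ * s * d + η₂ * d ^ 2 - T * (1 - κ * s) := by
  have hM : 0 ≤ M := (abs_nonneg η₁).trans hη₁
  have ha_s : a * s ≤ M * s := mul_le_mul_of_nonneg_right ha hs
  have hη₁_sd : η₁ * s * d ≤ M * s := calc
    η₁ * s * d ≤ M * (s * d) := by
      rw [mul_assoc]; exact mul_le_mul_of_nonneg_right (le_of_abs_le hη₁) (by positivity)
    _ ≤ M * s := mul_le_mul_of_nonneg_left (mul_le_of_le_one_right hs hd₁) hM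
  have hη₂_d : -(η₂ * d ^ 2) ≤ M * s := calc
    -(η₂ * d ^ 2) ≤ M * d ^ 2 := by
      rw [← neg_mul]; exact mul_le_mul_of_nonneg_right (neg_le.mp (abs_le.mp hη₂).1) (by positivity)
    _ ≤ M * s := by
      refine mul_le_mul_of_nonneg_left ?_ hM
      nlinarith [mul_le_mul hd₁ hds hd₀ zero_le_one]
  nlinarith [mul_nonneg hb hs, mul_nonneg (mul_nonneg hT hκ) hs]

/-- Uniform positivity estimate for the neighborhood condition: there exists
`ᾱ ∈ (0, π/2]` such that for all bounded data with `a − T ≥ c` the expression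
`a(1 − sin α) + b sin α − η₁ sin α (1 − cos α) + η₂ (1 − cos α)² − T(1 − 2β(1−σ) sin α)`
is nonnegative for all `α ∈ [0, ᾱ]`. -/
theorem hat_alpha_uniform (c M : ℝ) (hc : 0 < c) (hM : 0 < M) :
    ∃ αbar ∈ Set.Ioc (0 : ℝ) (Real.pi / 2),
      ∀ a b η₁ η₂ T β σ : ℝ,
        0 ≤ a → a ≤ M → 0 ≤ b → b ≤ M → |η₁| ≤ M → |η₂| ≤ M →
        0 ≤ T → c ≤ a - T →
        β ∈ Set.Ioc (0 : ℝ) (1 / 2) → σ ∈ Set.Ioo (0 : ℝ) 1 →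
        ∀ α ∈ Set.Icc (0 : ℝ) αbar,
          0 ≤ a * (1 - Real.sin α) + b * Real.sin α
            - η₁ * Real.sin α * (1 - Real.cos α)
            + η₂ * (1 - Real.cos α) ^ 2
            - T * (1 - 2 * β * (1 - σ) * Real.sin α) := by
  refine ⟨min (π / 2) (c / (3 * M)), ⟨lt_min (by positivity) (by positivity), min_le_left _ _⟩, ?_⟩
  intro a b η₁ η₂ T β σ _ haM hb _ hη₁ hη₂ hT hcaT hβ hσ α ⟨hα₀, hα⟩
  have hα_mem : α ∈ Set.Icc 0 (π / 2) := ⟨hα₀, hα.trans (min_le_left _ _)⟩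
  have hsin : 0 ≤ sin α := sin_nonneg_of_nonneg_of_le_pi hα₀ (by linarith [pi_pos, hα_mem.2])
  have hsin_small : 3 * M * sin α ≤ c := calc
    3 * M * sin α ≤ 3 * M * (c / (3 * M)) :=
      mul_le_mul_of_nonneg_left ((sin_le hα₀).trans (hα.trans (min_le_right _ _))) (by positivity)
    _ = c := by field_simp
  have hκ : 0 ≤ 2 * β * (1 - σ) := mul_nonneg (by linarith [hβ.1]) (by linarith [hσ.2])
  have hcos : 0 ≤ cos α := cos_nonneg_of_mem_Icc ⟨by linarith [pi_pos], hα_mem.2⟩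
  have hlower := sub_sub_three_mul_le_of_abs_le haM hb hη₁ hη₂ hT hκ hsin
    (by linarith [cos_le_one α]) (by linarith) (one_sub_cos_le_sin hα_mem)
  linarith
end

section
/- Let δ ∈ (0,1), w > 0, ẇ > 0, ẅ > 0, and define w(α) = w − ẇ sin α + ẅ(1 − cos α), r = √(ẇ² + ẅ²), and β = arcsin(ẅ/r). (i) If (1−δ)w + ẅ ≥ r, then w(α) ≥ δw for all α ∈ [0, π/2]. (ii) If (1−δ)w + ẅ < r, then arcsin(((1−δ)w + ẅ)/r) − β ≥ 0 and w(α) ≥ δw for all α ∈ [0, arcsin(((1−δ)w + ẅ)/r) − β]. -/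
/-- Case 3 (`ẇ > 0`, `ẅ > 0`) of the largest step angle computation: with
`r = √(ẇ² + ẅ²)` and `β = arcsin(ẅ/r)`, (i) if `(1−δ)w + ẅ ≥ r` then
`w(α) ≥ δw` on `[0, π/2]`; (ii) if `(1−δ)w + ẅ < r` then
`arcsin(((1−δ)w + ẅ)/r) − β ≥ 0` and `w(α) ≥ δw` on
`[0, arcsin(((1−δ)w + ẅ)/r) − β]`. -/
theorem step_angle_case3 (δ w wdot wddot : ℝ)
    (hδ : δ ∈ Set.Ioo (0 : ℝ) 1) (hw : 0 < w)
    (hwdot : 0 < wdot) (hwddot : 0 < wddot) :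
    let r := Real.sqrt (wdot ^ 2 + wddot ^ 2)
    let β := Real.arcsin (wddot / r)
    ((r ≤ (1 - δ) * w + wddot →
        ∀ α ∈ Set.Icc (0 : ℝ) (Real.pi / 2),
          δ * w ≤ w - wdot * Real.sin α + wddot * (1 - Real.cos α)) ∧
     ((1 - δ) * w + wddot < r →
        0 ≤ Real.arcsin (((1 - δ) * w + wddot) / r) - β ∧
        ∀ α ∈ Set.Icc (0 : ℝ) (Real.arcsin (((1 - δ) * w + wddot) / r) - β),
          δ * w ≤ w - wdot * Real.sin α + wddot * (1 - Real.cos α))) := by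
  intro r β
  obtain ⟨hδ0, hδ1⟩ := hδ
  have hrpos : 0 < r := Real.sqrt_pos.mpr (by positivity)
  have hr2 : r ^ 2 = wdot ^ 2 + wddot ^ 2 := Real.sq_sqrt (by positivity)
  have hwdr : wddot < r := by nlinarith [sq_nonneg (r + wddot)]
  have hdiv1 : wddot / r ≤ 1 := by
    rw [div_le_one hrpos]; linarith
  have hdiv0 : 0 ≤ wddot / r := by positivity
  have hsinβ : Real.sin β = wddot / r := Real.sin_arcsin (by linarith) hdiv1
  have hcosβ : Real.cos β = wdot / r := by
    rw [Real.cos_arcsin]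
    have h1 : 1 - (wddot / r) ^ 2 = (wdot / r) ^ 2 := by
      field_simp; nlinarith
    rw [h1, Real.sqrt_sq (by positivity)]
  have key : ∀ α : ℝ, wdot * Real.sin α + wddot * Real.cos α
      = r * Real.sin (α + β) := by
    intro α
    rw [Real.sin_add, hsinβ, hcosβ]
    field_simp
  constructor
  · intro hrc α _
    have hb : wdot * Real.sin α + wddot * Real.cos α ≤ r := by
      nlinarith [sq_nonneg (wdot * Real.cos α - wddot * Real.sin α),
        Real.sin_sq_add_cos_sq α,
        sq_nonneg (r + (wdot * Real.sin α + wddot * Real.cos α))]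
    nlinarith
  · intro hc
    set c := (1 - δ) * w + wddot with hcdef
    have hc0 : 0 < c := by nlinarith
    have hcr1 : c / r ≤ 1 := by rw [div_le_one hrpos]; linarith
    have hwc : wddot < c := by nlinarith
    have hmono : β ≤ Real.arcsin (c / r) :=
      Real.monotone_arcsin (div_le_div_of_nonneg_right hwc.le hrpos.le)
    refine ⟨by linarith, ?_⟩
    intro α ⟨hα0, hα1⟩
    have hβ0 : 0 ≤ β := Real.arcsin_nonneg.mpr hdiv0
    have hsum : α + β ≤ Real.arcsin (c / r) := by linarith
    have hle2 : α + β ≤ Real.pi / 2 :=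
      le_trans hsum (Real.arcsin_le_pi_div_two _)
    have hsin : Real.sin (α + β) ≤ c / r := by
      calc Real.sin (α + β) ≤ Real.sin (Real.arcsin (c / r)) := by
            apply Real.strictMonoOn_sin.monotoneOn
              ⟨by linarith [Real.pi_pos], hle2⟩
              ⟨Real.neg_pi_div_two_le_arcsin _, Real.arcsin_le_pi_div_two _⟩
              hsum
        _ = c / r := Real.sin_arcsin (le_trans (by norm_num) (div_nonneg hc0.le hrpos.le)) hcr1
    have : wdot * Real.sin α + wddot * Real.cos α ≤ c := by
      rw [key]
      calc r * Real.sin (α + β) ≤ r * (c / r) := by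
            exact mul_le_mul_of_nonneg_left hsin hrpos.le
        _ = c := by field_simp
    linarith
end

section
/- Let δ ∈ (0,1), w > 0, ẇ > 0, ẅ < 0, and define w(α) = w − ẇ sin α + ẅ(1 − cos α), r = √(ẇ² + ẅ²), and β = arcsin(−ẅ/r). (i) If (1−δ)w + ẅ ≥ r, then w(α) ≥ δw for all α ∈ [0, π/2]. (ii) If (1−δ)w + ẅ < r, then ((1−δ)w + ẅ)/r ∈ [−1, 1) and w(α) ≥ δw for every α ∈ [0, π/2] with α ≤ arcsin(((1−δ)w + ẅ)/r) + β. -/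
/-!
Writing `ẇ sin α + ẅ cos α = r sin (α − β)`, the condition `w(α) ≥ δw` becomes
`r sin (α − β) ≤ (1 − δ)w + ẅ`. If the right-hand side is at least `r`, this holds for every `α`.
Otherwise `c = ((1 − δ)w + ẅ)/r` lies in `[−1, 1)` because `|ẅ| ≤ r`, and `α − β ≤ arcsin c` gives
`sin (α − β) ≤ c` by monotonicity of `sin` on `[−π/2, π/2]`.
-/

open Real Set

lemma mul_sin_add_mul_cos_eq_sqrt_mul_sin_sub {a : ℝ} (b x : ℝ) (ha : 0 < a) :
    a * sin x + b * cos x = √(a ^ 2 + b ^ 2) * sin (x - arcsin (-b / √(a ^ 2 + b ^ 2))) := by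
  set r := √(a ^ 2 + b ^ 2)
  have hr : 0 < r := sqrt_pos.mpr (by positivity)
  have hr2 : r ^ 2 = a ^ 2 + b ^ 2 := sq_sqrt (by positivity)
  have hb : |-b / r| ≤ 1 := by
    rw [abs_div, abs_of_pos hr, div_le_one hr, abs_neg]
    exact abs_le_sqrt (le_add_of_nonneg_left (sq_nonneg _))
  have hsin : sin (arcsin (-b / r)) = -b / r := sin_arcsin (abs_le.mp hb).1 (abs_le.mp hb).2
  have hcos : cos (arcsin (-b / r)) = a / r := by
    rw [cos_arcsin, ← sqrt_sq (div_pos ha hr).le]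
    congr 1
    field_simp
    linarith
  rw [sin_sub, hsin, hcos]
  field_simp
  ring

theorem step_angle_case4_general (δ w wdot wddot : ℝ)
    (hδ : δ ∈ Set.Ioo (0 : ℝ) 1) (hw : 0 < w)
    (hwdot : 0 < wdot) :
    let r := Real.sqrt (wdot ^ 2 + wddot ^ 2)
    let β := Real.arcsin (-wddot / r)
    ((r ≤ (1 - δ) * w + wddot →
        ∀ α ∈ Set.Icc (0 : ℝ) (Real.pi / 2),
          δ * w ≤ w - wdot * Real.sin α + wddot * (1 - Real.cos α)) ∧
     ((1 - δ) * w + wddot < r →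
        ((1 - δ) * w + wddot) / r ∈ Set.Ico (-1 : ℝ) 1 ∧
        ∀ α ∈ Set.Icc (0 : ℝ) (Real.pi / 2),
          α ≤ Real.arcsin (((1 - δ) * w + wddot) / r) + β →
          δ * w ≤ w - wdot * Real.sin α + wddot * (1 - Real.cos α))) := by
  intro r β
  have hr : 0 < r := sqrt_pos.mpr (by positivity)
  have reduce (α : ℝ) (h : r * sin (α - β) ≤ (1 - δ) * w + wddot) :
      δ * w ≤ w - wdot * sin α + wddot * (1 - cos α) := by
    linarith [mul_sin_add_mul_cos_eq_sqrt_mul_sin_sub wddot α hwdot]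
  refine ⟨fun hge α _ => reduce α ?_, fun hlt => ?_⟩
  · linarith [mul_le_of_le_one_right hr.le (sin_le_one (α - β))]
  set c := ((1 - δ) * w + wddot) / r
  have hc : c ∈ Ico (-1 : ℝ) 1 := by
    have hwddot : -r ≤ wddot :=
      neg_le_of_abs_le (abs_le_sqrt (le_add_of_nonneg_left (sq_nonneg _)))
    have hslack : 0 ≤ (1 - δ) * w := mul_nonneg (sub_nonneg.mpr hδ.2.le) hw.le
    exact ⟨(le_div_iff₀ hr).mpr (by linarith), (div_lt_one hr).mpr hlt⟩
  refine ⟨hc, fun α hα hαc => reduce α ?_⟩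
  have hsin : sin (α - β) ≤ c := by
    refine (le_arcsin_iff_sin_le ⟨?_, ?_⟩ (Ico_subset_Icc_self hc)).mp (by linarith)
    · linarith [hα.1, arcsin_le_pi_div_two (-wddot / r)]
    · linarith [arcsin_le_pi_div_two c]
  calc r * sin (α - β) ≤ r * c := by gcongr
    _ = (1 - δ) * w + wddot := mul_div_cancel₀ _ hr.ne'

/-- Case 4 (`ẇ > 0`, `ẅ < 0`) of the largest step angle computation: with
`r = √(ẇ² + ẅ²)` and `β = arcsin(−ẅ/r)`, (i) if `(1−δ)w + ẅ ≥ r` then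
`w(α) ≥ δw` on `[0, π/2]`; (ii) if `(1−δ)w + ẅ < r` then
`((1−δ)w + ẅ)/r ∈ [−1, 1)` and `w(α) ≥ δw` for every `α ∈ [0, π/2]` with
`α ≤ arcsin(((1−δ)w + ẅ)/r) + β`. -/
theorem step_angle_case4 (δ w wdot wddot : ℝ)
    (hδ : δ ∈ Set.Ioo (0 : ℝ) 1) (hw : 0 < w)
    (hwdot : 0 < wdot) (hwddot : wddot < 0) :
    let r := Real.sqrt (wdot ^ 2 + wddot ^ 2)
    let β := Real.arcsin (-wddot / r)
    ((r ≤ (1 - δ) * w + wddot →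
        ∀ α ∈ Set.Icc (0 : ℝ) (Real.pi / 2),
          δ * w ≤ w - wdot * Real.sin α + wddot * (1 - Real.cos α)) ∧
     ((1 - δ) * w + wddot < r →
        ((1 - δ) * w + wddot) / r ∈ Set.Ico (-1 : ℝ) 1 ∧
        ∀ α ∈ Set.Icc (0 : ℝ) (Real.pi / 2),
          α ≤ Real.arcsin (((1 - δ) * w + wddot) / r) + β →
          δ * w ≤ w - wdot * Real.sin α + wddot * (1 - Real.cos α))) :=
  step_angle_case4_general δ w wdot wddot hδ hw hwdot
end

section
/- Let δ ∈ (0,1), w > 0, ẇ < 0, ẅ < 0, and define w(α) = w − ẇ sin α + ẅ(1 − cos α), r = √(ẇ² + ẅ²), and β = arcsin(−ẅ/r). (i) If (1−δ)w + ẅ ≥ 0, then w(α) ≥ δw for all α ∈ [0, π/2]. (ii) If (1−δ)w + ẅ < 0, then −((1−δ)w + ẅ)/r ∈ (0, 1] and w(α) ≥ δw for every α ∈ [0, π/2] with α ≤ π − arcsin(−((1−δ)w + ẅ)/r) − β. -/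
/-!
Harmonic addition turns `-ẇ sin α - ẅ cos α` into `r sin (α + β)`, so
`w(α) = w + ẅ + r sin (α + β)` with `β ∈ [0, π/2]`. In case (i) the sine term is nonnegative on
`[0, π/2]`. In case (ii) the claim is `sin (α + β) ≥ c / r` for `c = -((1 - δ) w + ẅ) ≤ -ẅ`, and
this holds because `arcsin (c / r) ≤ β ≤ α + β ≤ π - arcsin (c / r)`.
-/

open Real Set

namespace Real

theorem le_sin_of_arcsin_le_of_le_pi_sub_arcsin {x θ : ℝ} (hx : x ∈ Icc (-1 : ℝ) 1)
    (hlo : arcsin x ≤ θ) (hhi : θ ≤ π - arcsin x) : x ≤ sin θ := by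
  have hlo' := neg_pi_div_two_le_arcsin x
  have hhi' := arcsin_le_pi_div_two x
  rcases le_total θ (π / 2) with hθ | hθ
  · exact (arcsin_le_iff_le_sin hx ⟨by linarith, hθ⟩).mp hlo
  · rw [← sin_pi_sub]
    exact (arcsin_le_iff_le_sin hx ⟨by linarith, by linarith⟩).mp (by linarith)

theorem abs_div_sqrt_sq_add_sq_le_one (a b : ℝ) : |b / √(a ^ 2 + b ^ 2)| ≤ 1 := by
  rw [abs_div, abs_of_nonneg (sqrt_nonneg _)]
  exact div_le_one_of_le₀ (abs_le_sqrt (by nlinarith)) (sqrt_nonneg _)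

theorem mul_sin_add_mul_cos_eq_sqrt_mul_sin_add_arcsin {a : ℝ} (ha : 0 ≤ a) (b α : ℝ) :
    a * sin α + b * cos α =
      √(a ^ 2 + b ^ 2) * sin (α + arcsin (b / √(a ^ 2 + b ^ 2))) := by
  rcases (sqrt_nonneg (a ^ 2 + b ^ 2)).eq_or_lt with hr | hr
  · have hab : a ^ 2 + b ^ 2 = 0 := (sqrt_eq_zero (by positivity)).mp hr.symm
    have ha0 : a = 0 := by nlinarith
    have hb0 : b = 0 := by nlinarith
    simp [ha0, hb0]
  set r := √(a ^ 2 + b ^ 2)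
  have hsq : r ^ 2 = a ^ 2 + b ^ 2 := sq_sqrt (by positivity)
  have hsin : sin (arcsin (b / r)) = b / r :=
    sin_arcsin' (abs_le.mp (abs_div_sqrt_sq_add_sq_le_one a b))
  have hcos : cos (arcsin (b / r)) = a / r := by
    rw [cos_arcsin, show 1 - (b / r) ^ 2 = (a / r) ^ 2 by field_simp; linarith]
    exact sqrt_sq (div_nonneg ha hr.le)
  rw [sin_add, hsin, hcos]
  field_simp

end Real

/-- Case 5 (`ẇ < 0`, `ẅ < 0`) of the largest step angle computation: with
`r = √(ẇ² + ẅ²)` and `β = arcsin(−ẅ/r)`, (i) if `(1−δ)w + ẅ ≥ 0` then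
`w(α) ≥ δw` on `[0, π/2]`; (ii) if `(1−δ)w + ẅ < 0` then
`−((1−δ)w + ẅ)/r ∈ (0, 1]` and `w(α) ≥ δw` for every `α ∈ [0, π/2]` with
`α ≤ π − arcsin(−((1−δ)w + ẅ)/r) − β`. -/
theorem step_angle_case5 (δ w wdot wddot : ℝ)
    (hδ : δ ∈ Set.Ioo (0 : ℝ) 1) (hw : 0 < w)
    (hwdot : wdot < 0) (hwddot : wddot < 0) :
    let r := Real.sqrt (wdot ^ 2 + wddot ^ 2)
    let β := Real.arcsin (-wddot / r)
    ((0 ≤ (1 - δ) * w + wddot →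
        ∀ α ∈ Set.Icc (0 : ℝ) (Real.pi / 2),
          δ * w ≤ w - wdot * Real.sin α + wddot * (1 - Real.cos α)) ∧
     ((1 - δ) * w + wddot < 0 →
        -((1 - δ) * w + wddot) / r ∈ Set.Ioc (0 : ℝ) 1 ∧
        ∀ α ∈ Set.Icc (0 : ℝ) (Real.pi / 2),
          α ≤ Real.pi - Real.arcsin (-((1 - δ) * w + wddot) / r) - β →
          δ * w ≤ w - wdot * Real.sin α + wddot * (1 - Real.cos α))) := by
  intro r β
  have hr : 0 < r := sqrt_pos.mpr (by nlinarith)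
  have hβ : 0 ≤ β := arcsin_nonneg.mpr (div_nonneg (by linarith) hr.le)
  have hwα : ∀ α, w - wdot * sin α + wddot * (1 - cos α) = w + wddot + r * sin (α + β) := by
    intro α
    have h := mul_sin_add_mul_cos_eq_sqrt_mul_sin_add_arcsin (neg_nonneg.mpr hwdot.le) (-wddot) α
    simp only [neg_sq] at h
    linarith
  refine ⟨fun h α hα => ?_, fun h => ?_⟩
  · have hsin : 0 ≤ sin (α + β) :=
      sin_nonneg_of_nonneg_of_le_pi (by linarith [hα.1])
        (by linarith [hα.2, arcsin_le_pi_div_two (-wddot / r)])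
    rw [hwα]
    linarith [mul_nonneg hr.le hsin]
  set c := -((1 - δ) * w + wddot)
  have hc_le : c ≤ -wddot := by nlinarith [hδ.2]
  have hβ_le : -wddot / r ≤ 1 := by
    rw [neg_div, neg_le]
    exact (abs_le.mp (abs_div_sqrt_sq_add_sq_le_one wdot wddot)).1
  have hcr : c / r ∈ Ioc 0 1 :=
    ⟨div_pos (by linarith) hr, (div_le_div_of_nonneg_right hc_le hr.le).trans hβ_le⟩
  refine ⟨hcr, fun α hα hαβ => ?_⟩
  have hsin : c / r ≤ sin (α + β) :=
    le_sin_of_arcsin_le_of_le_pi_sub_arcsin ⟨by linarith [hcr.1], hcr.2⟩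
      ((monotone_arcsin (div_le_div_of_nonneg_right hc_le hr.le)).trans (by linarith [hα.1]))
      (by linarith)
  rw [hwα]
  linarith [(div_le_iff₀' hr).mp hsin]
end
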